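/- arXiv:1903.10636 — 3 statements merged into one kernel-verified Lean document; each statement's English description precedes it below -/
import Mathlib

section
/- Let P = (p_1, …, p_m), m > 1, be a consistent set of monitoring paths, where p_i has length d_i (number of nodes). Then for each i, the number of distinct encodings among the nodes of p_i, i.e. |{b(v) : v appears on p_i}|, is at most min{d_i, 2·(m−1)}. -/
/-- The contiguous segment of the list `l` between (the first occurrences of) the
nodes `u` and `w`, inclusive, taken in the order of `l`. -/
def seg {V : Type*} [DecidableEq V] (l : List V) (u w : V) : List V :=
  (l.drop (min (l.idxOf u) (l.idxOf w))).take
    (max (l.idxOf u) (l.idxOf w) - min (l.idxOf u) (l.idxOf w) + 1)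

/-- Two paths are consistent if, for any two nodes `u, w` appearing on both, the
contiguous segment of one between `u` and `w` equals, up to reversal, the
contiguous segment of the other between `u` and `w`. -/
def ConsistentPair {V : Type*} [DecidableEq V] (l l' : List V) : Prop :=
  ∀ u w : V, u ∈ l → w ∈ l → u ∈ l' → w ∈ l' →
    seg l u w = seg l' u w ∨ seg l u w = (seg l' u w).reverse

/-- A family of paths is consistent if every two of its paths are consistent. -/
def Consistent {V : Type*} [DecidableEq V] {ι : Type*} (p : ι → List V) : Prop :=
  ∀ i j, ConsistentPair (p i) (p j)

/-- The encoding of a node `v` w.r.t. monitoring paths `p`: the set of indices of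
paths on which `v` appears. -/
def encoding {V : Type*} [DecidableEq V] {m : ℕ} (p : Fin m → List V) (v : V) :
    Finset (Fin m) :=
  Finset.univ.filter fun i => v ∈ p i

/-!
Along the path `p i`, consistency with `p j` makes the positions of the nodes that also lie on
`p j` an interval. So, after removing the index `i` that they all contain, the encodings along
`p i` form a sequence of subsets of the other `m - 1` indices in which each index occupies an
interval. The position where a nonempty value first appears is one where some index enters or
has just left, and it is not the last such position, because an index of that value leaves
later; that last position pays for the empty value, and there are at most `2 (m - 1)` of them.
-/

open Finset

theorem card_image_erase_of_forall_mem {α β : Type*} [DecidableEq β] {s : Finset α}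
    {g : α → Finset β} {a : β} (h : ∀ x ∈ s, a ∈ g x) :
    #(s.image fun x => (g x).erase a) = #(s.image g) := by
  have hcomp : (s.image fun x => (g x).erase a) = (s.image g).image (·.erase a) := by
    rw [image_image]; rfl
  rw [hcomp]
  refine card_image_of_injOn ((erase_injOn' a).mono fun S hS => ?_)
  obtain ⟨x, hx, rfl⟩ := mem_image.1 hS
  exact h x hx

theorem List.toFinset_eq_image_range_getD {α : Type*} [DecidableEq α] (l : List α) (v : α) :
    l.toFinset = (Finset.range l.length).image (l.getD · v) := by
  ext x
  simp only [List.mem_toFinset, mem_image, Finset.mem_range, List.mem_iff_getElem]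
  constructor
  · rintro ⟨t, ht, rfl⟩
    exact ⟨t, ht, List.getD_eq_getElem _ _ ht⟩
  · rintro ⟨t, ht, rfl⟩
    exact ⟨t, ht, (List.getD_eq_getElem _ _ ht).symm⟩

section IntervalFamily

variable {ι : Type*} (f : ℕ → Finset ι) (d : ℕ)

noncomputable def firstPos (j : ι) : ℕ := sInf {t | t < d ∧ j ∈ f t}

noncomputable def lastPos (j : ι) : ℕ := sSup {t | t < d ∧ j ∈ f t}

/-- The positions where some element of `J` enters the sequence `f`, or where it has just
left it. -/
noncomputable def boundaryPositions (J : Finset ι) : Finset ℕ :=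
  J.image (firstPos f d) ∪ J.image (lastPos f d · + 1)

theorem card_boundaryPositions_le (J : Finset ι) : #(boundaryPositions f d J) ≤ 2 * #J :=
  (card_union_le _ _).trans (by rw [two_mul]; exact add_le_add card_image_le card_image_le)

variable {f d} {t : ℕ} {j : ι}

theorem firstPos_le (ht : t < d) (hj : j ∈ f t) : firstPos f d j ≤ t :=
  Nat.sInf_le ⟨ht, hj⟩

theorem le_lastPos (ht : t < d) (hj : j ∈ f t) : t ≤ lastPos f d j :=
  le_csSup ⟨d, fun _ hs => hs.1.le⟩ ⟨ht, hj⟩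

theorem firstPos_mem (ht : t < d) (hj : j ∈ f t) :
    firstPos f d j < d ∧ j ∈ f (firstPos f d j) :=
  Nat.sInf_mem (s := {t | t < d ∧ j ∈ f t}) ⟨t, ht, hj⟩

theorem lastPos_mem (ht : t < d) (hj : j ∈ f t) : lastPos f d j < d ∧ j ∈ f (lastPos f d j) :=
  Nat.sSup_mem (s := {t | t < d ∧ j ∈ f t}) ⟨t, ht, hj⟩ ⟨d, fun _ hs => hs.1.le⟩

variable {J : Finset ι}

/-- If no element enters at a position where a new nonempty value appears then, by convexity,
every element present was already present just before, so some element leaves there. -/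
theorem mem_boundaryPositions_of_forall_lt_ne
    (hconv : ∀ j, Set.OrdConnected {t | t < d ∧ j ∈ f t}) (hsub : ∀ t < d, f t ⊆ J)
    (ht : t < d) (hne : (f t).Nonempty) (hnew : ∀ s < t, f s ≠ f t) :
    t ∈ boundaryPositions f d J := by
  by_cases henter : ∃ j ∈ f t, firstPos f d j = t
  · obtain ⟨j, hj, rfl⟩ := henter
    exact mem_union_left _ (mem_image_of_mem _ (hsub _ ht hj))
  push Not at henter
  have hbefore : ∀ j ∈ f t, firstPos f d j < t := fun j hj =>
    (firstPos_le ht hj).lt_of_ne (henter j hj)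
  obtain ⟨j₀, hj₀⟩ := hne
  have htpos : 0 < t := Nat.zero_lt_of_lt (hbefore j₀ hj₀)
  have hprev : f t ⊆ f (t - 1) := fun j hj =>
    ((hconv j).out (firstPos_mem ht hj) ⟨ht, hj⟩
      ⟨Nat.le_sub_one_of_lt (hbefore j hj), Nat.sub_le t 1⟩).2
  obtain ⟨j, hj, hjt⟩ : ∃ j ∈ f (t - 1), j ∉ f t := by
    by_contra! h
    exact hnew (t - 1) (by omega) (Subset.antisymm h hprev)
  have hleave : lastPos f d j + 1 = t := by
    have hle : t - 1 ≤ lastPos f d j := le_lastPos (by omega) hj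
    by_contra
    exact hjt ((hconv j).out ⟨by omega, hj⟩ (lastPos_mem (by omega) hj)
      ⟨by omega, by omega⟩).2
  rw [← hleave]
  exact mem_union_right _ (mem_image_of_mem _ (hsub _ (by omega) hj))

theorem card_image_range_le_two_mul_card [DecidableEq ι]
    (hconv : ∀ j, Set.OrdConnected {t | t < d ∧ j ∈ f t}) (hsub : ∀ t < d, f t ⊆ J)
    (hJ : J.Nonempty) :
    #((range d).image f) ≤ 2 * #J := by
  set B := boundaryPositions f d J
  have hB : B.Nonempty := hJ.image _ |>.mono subset_union_left
  set values := (range d).image f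
  set first : Finset ι → ℕ := fun S => sInf {t | t < d ∧ f t = S}
  have hfirst : ∀ S ∈ values, first S < d ∧ f (first S) = S := by
    intro S hS
    obtain ⟨t, ht, rfl⟩ := mem_image.1 hS
    exact Nat.sInf_mem (s := {s | s < d ∧ f s = f t}) ⟨t, mem_range.1 ht, rfl⟩
  have hmaps : Set.MapsTo first (values.filter (·.Nonempty)) (B.erase (B.max' hB)) := by
    intro S hS
    obtain ⟨hSval, j, hj⟩ := mem_filter.1 hS
    obtain ⟨hd, hfS⟩ := hfirst S hSval
    have hjt : j ∈ f (first S) := by rw [hfS]; exact hj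
    have hnew : ∀ s < first S, f s ≠ f (first S) := fun s hs heq =>
      Nat.notMem_of_lt_sInf hs ⟨by omega, heq.trans hfS⟩
    have hlast : lastPos f d j + 1 ∈ B :=
      mem_union_right _ (mem_image_of_mem _ (hsub _ hd hjt))
    refine mem_erase.2
      ⟨?_, mem_boundaryPositions_of_forall_lt_ne hconv hsub hd ⟨j, hjt⟩ hnew⟩
    exact ((Nat.lt_succ_of_le (le_lastPos hd hjt)).trans_le (B.le_max' _ hlast)).ne
  have hinj : Set.InjOn first (values.filter (·.Nonempty)) := fun S hS S' hS' heq => by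
    rw [← (hfirst S (mem_filter.1 hS).1).2, ← (hfirst S' (mem_filter.1 hS').1).2, heq]
  calc #values
      ≤ #(insert ∅ (values.filter (·.Nonempty))) := by
        refine card_le_card fun S hS => ?_
        rcases S.eq_empty_or_nonempty with rfl | hne
        · exact mem_insert_self _ _
        · exact mem_insert_of_mem (mem_filter.2 ⟨hS, hne⟩)
    _ ≤ #(values.filter (·.Nonempty)) + 1 := card_insert_le _ _
    _ ≤ #(B.erase (B.max' hB)) + 1 := by gcongr; exact card_le_card_of_injOn first hmaps hinj
    _ = #B := card_erase_add_one (B.max'_mem hB)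
    _ ≤ 2 * #J := card_boundaryPositions_le f d J

end IntervalFamily

section Paths

variable {V : Type*} [DecidableEq V]

theorem seg_subset (l : List V) (u w : V) : seg l u w ⊆ l := fun _ hx =>
  List.mem_of_mem_drop (List.mem_of_mem_take hx)

theorem getElem_mem_seg {l : List V} (hl : l.Nodup) {a b c : ℕ} (hab : a ≤ b) (hbc : b ≤ c)
    (hc : c < l.length) :
    l[b] ∈ seg l l[a] l[c] := by
  unfold seg
  rw [hl.idxOf_getElem a (by omega), hl.idxOf_getElem c hc,
    min_eq_left (by omega), max_eq_right (by omega)]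
  have hlen : b - a < ((l.drop a).take (c - a + 1)).length := by
    simp only [List.length_take, List.length_drop]
    omega
  have heq : ((l.drop a).take (c - a + 1))[b - a]'hlen = l[b] := by
    simp only [List.getElem_take, List.getElem_drop, Nat.add_sub_cancel' hab]
  rw [← heq]
  exact List.getElem_mem _

theorem ConsistentPair.ordConnected_positions {l l' : List V} (h : ConsistentPair l l')
    (hl : l.Nodup) (v : V) :
    Set.OrdConnected {t | t < l.length ∧ l.getD t v ∈ l'} := by
  refine ⟨fun a ⟨ha, hal'⟩ c ⟨hc, hcl'⟩ b ⟨hab, hbc⟩ => ⟨by omega, ?_⟩⟩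
  rw [List.getD_eq_getElem _ _ ha] at hal'
  rw [List.getD_eq_getElem _ _ hc] at hcl'
  rw [List.getD_eq_getElem _ _ (by omega)]
  have hb := getElem_mem_seg hl hab hbc hc
  rcases h _ _ (List.getElem_mem _) (List.getElem_mem _) hal' hcl' with heq | heq
  · exact seg_subset _ _ _ (heq ▸ hb)
  · exact seg_subset _ _ _ (List.mem_reverse.1 (heq ▸ hb))

end Paths

/-- Lemma IV.8: with `m > 1` consistent routing paths, the number of distinct
encodings among the nodes of path `p i` (of length `d_i = (p i).length`) is at
most `min d_i (2·(m−1))`. -/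
theorem distinct_encodings_le_consistent {V : Type*} [DecidableEq V] {m : ℕ}
    (hm : 1 < m) (p : Fin m → List V) (hnodup : ∀ i, (p i).Nodup)
    (hcons : Consistent p) (i : Fin m) :
    ((p i).toFinset.image (encoding p)).card ≤ min (p i).length (2 * (m - 1)) := by
  refine le_min (card_image_le.trans (List.toFinset_card_of_nodup (hnodup i)).le) ?_
  rcases eq_or_ne (p i) [] with hnil | hne
  · simp [hnil]
  obtain ⟨v, -⟩ := (p i).exists_mem_of_ne_nil hne
  have hi : ∀ t ∈ range (p i).length, i ∈ encoding p ((p i).getD t v) := fun t ht => by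
    simp only [encoding, mem_filter, mem_univ, true_and]
    rw [List.getD_eq_getElem _ _ (mem_range.1 ht)]
    exact List.getElem_mem _
  have hconv : ∀ j, Set.OrdConnected
      {t | t < (p i).length ∧ j ∈ (encoding p ((p i).getD t v)).erase i} := by
    intro j
    rcases eq_or_ne j i with rfl | hj
    · simpa using Set.ordConnected_empty
    · simpa [encoding, hj] using (hcons i j).ordConnected_positions (hnodup i) v
  have hJ : (univ.erase i).Nonempty := by
    rw [← card_pos, card_erase_of_mem (mem_univ i), card_univ, Fintype.card_fin]
    omega
  calc #((p i).toFinset.image (encoding p))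
      = #((range (p i).length).image fun t => (encoding p ((p i).getD t v)).erase i) := by
        rw [(p i).toFinset_eq_image_range_getD v, image_image, card_image_erase_of_forall_mem hi]
        rfl
    _ ≤ 2 * #(univ.erase i) := card_image_range_le_two_mul_card hconv
        (fun _ _ => erase_subset_erase _ (subset_univ _)) hJ
    _ = 2 * (m - 1) := by simp
end

section
/- Let P = (p_1, …, p_m) be a consistent set of monitoring paths all having the same final node r (so the paths form a tree rooted at r). Then for each path p_i, the number of identifiable nodes appearing on p_i is at most m. -/
/-- A node is identifiable iff its encoding is nonempty and distinct from the
encoding of every other node. -/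
def Identifiable {V : Type*} [DecidableEq V] {m : ℕ} (p : Fin m → List V) (v : V) :
    Prop :=
  encoding p v ≠ ∅ ∧ ∀ w : V, w ≠ v → encoding p w ≠ encoding p v

/-!
Since all paths end at `r` and are consistent, a path through a node `v` of `p i` also contains
the whole segment of `p i` from `v` to `r`. Hence the encodings of the nodes of `p i` grow along
`p i` towards `r` and form a chain of subsets of `Fin m`. Identifiable nodes have distinct nonempty
encodings, and the members of a chain of nonempty subsets of `Fin m` are told apart by their
cardinalities, which lie in `[1, m]`.
-/

lemma seg_infix {V : Type*} [DecidableEq V] (l : List V) (u w : V) : seg l u w <:+: l :=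
  (List.take_prefix _ _).isInfix.trans (List.drop_suffix _ _).isInfix

lemma mem_seg_of_idxOf_le_of_le {V : Type*} [DecidableEq V] {l : List V} {u w x : V}
    (hx : x ∈ l) (hux : min (l.idxOf u) (l.idxOf w) ≤ l.idxOf x)
    (hxw : l.idxOf x ≤ max (l.idxOf u) (l.idxOf w)) : x ∈ seg l u w := by
  refine List.mem_of_getElem? (i := l.idxOf x - min (l.idxOf u) (l.idxOf w)) ?_
  rw [seg, List.getElem?_take_of_lt (by omega), List.getElem?_drop, Nat.add_sub_cancel' hux]
  exact List.getElem?_idxOf hx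

lemma List.Nodup.idxOf_le_idxOf_of_getLast?_eq {V : Type*} [DecidableEq V] {l : List V} {r w : V}
    (hl : l.Nodup) (hr : l.getLast? = some r) (hw : w ∈ l) : l.idxOf w ≤ l.idxOf r := by
  obtain ⟨ys, rfl⟩ := List.getLast?_eq_some_iff.1 hr
  have hrys : r ∉ ys := fun h =>
    (List.nodup_append.1 hl).2.2 r h r (List.mem_singleton_self r) rfl
  have hwlt := List.idxOf_lt_length_iff.2 hw
  rw [List.idxOf_append_of_notMem hrys, List.idxOf_cons_self]
  simp only [List.length_append, List.length_singleton] at hwlt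
  omega

lemma ConsistentPair.seg_subset {V : Type*} [DecidableEq V] {l l' : List V} {u w : V}
    (h : ConsistentPair l l') (hu : u ∈ l) (hw : w ∈ l) (hu' : u ∈ l') (hw' : w ∈ l') :
    seg l u w ⊆ l' := by
  rcases h u w hu hw hu' hw' with heq | heq <;> rw [heq]
  · exact (seg_infix l' u w).subset
  · exact fun x hx => (seg_infix l' u w).subset (List.mem_reverse.1 hx)

lemma ConsistentPair.mem_of_idxOf_le {V : Type*} [DecidableEq V] {l l' : List V} {r v w : V}
    (h : ConsistentPair l l') (hl : l.Nodup) (hr : l.getLast? = some r) (hr' : r ∈ l')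
    (hv : v ∈ l) (hw : w ∈ l) (hvw : l.idxOf v ≤ l.idxOf w) (hv' : v ∈ l') : w ∈ l' := by
  have hwr := hl.idxOf_le_idxOf_of_getLast?_eq hr hw
  refine h.seg_subset hv (List.mem_of_getLast? hr) hv' hr' (mem_seg_of_idxOf_le_of_le hw ?_ ?_)
  · exact (min_le_left _ _).trans hvw
  · exact hwr.trans (le_max_right _ _)

lemma encoding_subset_of_idxOf_le {V : Type*} [DecidableEq V] {m : ℕ} {p : Fin m → List V}
    {r : V} (hnodup : ∀ i, (p i).Nodup) (hcons : Consistent p)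
    (hlast : ∀ i, (p i).getLast? = some r) {i : Fin m} {v w : V} (hv : v ∈ p i) (hw : w ∈ p i)
    (hvw : (p i).idxOf v ≤ (p i).idxOf w) : encoding p v ⊆ encoding p w := by
  intro j hj
  simp only [encoding, Finset.mem_filter, Finset.mem_univ, true_and] at hj ⊢
  exact (hcons i j).mem_of_idxOf_le (hnodup i) (hlast i) (List.mem_of_getLast? (hlast j))
    hv hw hvw hj

lemma IsChain.ncard_le_card_of_empty_notMem {α : Type*} [Fintype α] {s : Set (Finset α)}
    (hs : IsChain (· ⊆ ·) s) (hempty : ∅ ∉ s) : s.ncard ≤ Fintype.card α := by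
  have hinj : s.InjOn Finset.card := fun a ha b hb hab =>
    (hs.total ha hb).elim (fun h => Finset.eq_of_subset_of_card_le h hab.ge)
      (fun h => (Finset.eq_of_subset_of_card_le h hab.le).symm)
  have hmaps : ∀ a ∈ s, a.card ∈ (Finset.Icc 1 (Fintype.card α) : Set ℕ) := fun a ha => by
    simp only [Finset.coe_Icc, Set.mem_Icc, Finset.one_le_card]
    exact ⟨Finset.nonempty_iff_ne_empty.2 (ne_of_mem_of_not_mem ha hempty), a.card_le_univ⟩
  calc s.ncard ≤ (Finset.Icc 1 (Fintype.card α) : Set ℕ).ncard :=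
        Set.ncard_le_ncard_of_injOn _ hmaps hinj
    _ = Fintype.card α := by simp

/-- Lemma V.7: if the `m` consistent monitoring paths share a common final node `r`
(so that they form a tree rooted at `r`), then each path contains at most `m`
identifiable nodes. -/
theorem identifiable_on_path_le_m {V : Type*} [DecidableEq V] {m : ℕ}
    (p : Fin m → List V) (r : V) (hnodup : ∀ i, (p i).Nodup)
    (hcons : Consistent p) (hlast : ∀ i, (p i).getLast? = some r) (i : Fin m) :
    {v : V | v ∈ p i ∧ Identifiable p v}.ncard ≤ m := by
  set S := {v : V | v ∈ p i ∧ Identifiable p v}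
  have hinj : S.InjOn (encoding p) := fun v ⟨_, _, hv⟩ w _ hvw =>
    by_contra fun hne => hv w (Ne.symm hne) hvw.symm
  have hchain : IsChain (· ⊆ ·) (encoding p '' S) := by
    rintro _ ⟨v, ⟨hv, -⟩, rfl⟩ _ ⟨w, ⟨hw, -⟩, rfl⟩ -
    rcases le_total ((p i).idxOf v) ((p i).idxOf w) with hvw | hwv
    · exact .inl (encoding_subset_of_idxOf_le hnodup hcons hlast hv hw hvw)
    · exact .inr (encoding_subset_of_idxOf_le hnodup hcons hlast hw hv hwv)
  have hempty : ∅ ∉ encoding p '' S := fun ⟨_, ⟨_, hv, _⟩, heq⟩ => hv heq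
  calc S.ncard = (encoding p '' S).ncard := hinj.ncard_image.symm
    _ ≤ Fintype.card (Fin m) := hchain.ncard_le_card_of_empty_notMem hempty
    _ = m := Fintype.card_fin m
end

section
/- Let P = (p_1, …, p_m) be a consistent set of monitoring paths all having the same final node r (so the paths form a tree rooted at r). For each k let ℓ_k be the number of identifiable nodes appearing on path p_k. Then Σ_{k=1}^{m} ℓ_k ≤ (m² + 3m − 2)/2. -/
/-!
Since all paths end at `r` and are consistent, the part of a path from a node `u` onwards
does not depend on the path, so two encodings that meet are nested: the encodings form a
laminar family of subsets of the `m` path indices. Identifiable nodes have pairwise distinct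
encodings, and the sum counts `∑ |S|` over theirs. For a laminar family of subsets of an
`n`-set, `2 ∑ |S| ≤ n² + 3n - 2`, by induction splitting at a maximal proper member.
-/

open Finset

def IsLaminar {α : Type*} (F : Finset (Finset α)) : Prop :=
  ∀ S ∈ F, ∀ T ∈ F, S ⊆ T ∨ T ⊆ S ∨ Disjoint S T

namespace IsLaminar

variable {α : Type*} [DecidableEq α] {F : Finset (Finset α)}

omit [DecidableEq α] in
lemma mono {G : Finset (Finset α)} (hF : IsLaminar F) (hG : G ⊆ F) : IsLaminar G :=
  fun S hS T hT => hF S (hG hS) T (hG hT)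

lemma subset_sdiff_of_maximal {U M S : Finset α} (hF : IsLaminar F) (hFU : ∀ S ∈ F, S ⊆ U)
    (hM : Maximal (· ∈ F.filter Finset.Nonempty) M) (hS : S ∈ F) (hSM : ¬S ⊆ M) :
    S ⊆ U \ M := by
  have hMF : M ∈ F := (mem_filter.1 hM.prop).1
  rcases hF S hS M hMF with h | h | h
  · exact absurd h hSM
  · exact absurd (hM.2 (mem_filter.2 ⟨hS, (mem_filter.1 hM.prop).2.mono h⟩) h) hSM
  · exact subset_sdiff.2 ⟨hFU S hS, h⟩

theorem two_mul_sum_card_le {U : Finset α} (hF : IsLaminar F) (hFU : ∀ S ∈ F, S ⊆ U) :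
    2 * ∑ S ∈ F, #S ≤ #U ^ 2 + 3 * #U - 2 := by
  induction hn : #U using Nat.strong_induction_on generalizing U F with
  | _ n ih =>
  have hsum : ∑ S ∈ F, #S ≤ n + ∑ S ∈ F.erase U, #S := by
    by_cases hUF : U ∈ F
    · rw [← sum_erase_add F _ hUF, hn]; omega
    · rw [erase_eq_of_notMem hUF]; omega
  set G := F.erase U
  by_cases hGne : (G.filter Finset.Nonempty).Nonempty
  · obtain ⟨M, hM⟩ := (G.filter Finset.Nonempty).exists_maximal hGne
    obtain ⟨hMG, hMne⟩ := mem_filter.1 hM.prop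
    have hMU : M ⊂ U := (hFU M (mem_of_mem_erase hMG)).ssubset_of_ne (ne_of_mem_erase hMG)
    have hG : IsLaminar G := hF.mono (erase_subset U F)
    have hcard : #M + #(U \ M) = n := by
      rw [← hn, add_comm, card_sdiff_add_card_eq_card hMU.subset]
    have ha : 0 < #M := hMne.card_pos
    have hb : 0 < #(U \ M) := (sdiff_nonempty.2 (not_subset_of_ssubset hMU)).card_pos
    have hinner := ih _ (by omega) (hG.mono (filter_subset (· ⊆ M) G))
      (fun S hS => (mem_filter.1 hS).2) rfl
    have houter := ih _ (by omega) (hG.mono (filter_subset (¬· ⊆ M) G))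
      (fun S hS => hG.subset_sdiff_of_maximal (fun S hS => hFU S (mem_of_mem_erase hS)) hM
        (mem_filter.1 hS).1 (mem_filter.1 hS).2) rfl
    have hsplit := sum_filter_add_sum_filter_not G (· ⊆ M) card
    -- the bound for `#M + #(U \ M)` exceeds the sum of the two halves' bounds by
    -- `2 * #M * #(U \ M) + 2 ≥ 2 * n`, the contribution of `U` itself
    have hab : #M + #(U \ M) ≤ #M * #(U \ M) + 1 := by nlinarith
    have hsq : n ^ 2 = #M ^ 2 + 2 * (#M * #(U \ M)) + #(U \ M) ^ 2 := by rw [← hcard]; ring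
    omega
  · have hG0 : ∑ S ∈ G, #S = 0 := sum_eq_zero fun S hS => by
      rw [card_eq_zero, ← not_nonempty_iff_eq_empty]
      exact fun h => hGne ⟨S, mem_filter.2 ⟨hS, h⟩⟩
    have := Nat.le_self_pow two_ne_zero n
    omega

end IsLaminar

namespace List

variable {α : Type*} [DecidableEq α] {l : List α} {r x y : α}

lemma idxOf_eq_length_sub_one_of_getLast? (hl : l.Nodup) (hr : l.getLast? = some r) :
    l.idxOf r = l.length - 1 := by
  have hne : l ≠ [] := by rintro rfl; simp at hr
  obtain rfl : l.getLast hne = r := Option.some.inj ((getLast?_eq_some_getLast hne).symm.trans hr)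
  rw [getLast_eq_getElem]
  exact hl.idxOf_getElem _ _

lemma drop_idxOf_eq_singleton_of_getLast? (hl : l.Nodup) (hr : l.getLast? = some r) :
    l.drop (l.idxOf r) = [r] := by
  have hne : l ≠ [] := by rintro rfl; simp at hr
  rw [idxOf_eq_length_sub_one_of_getLast? hl hr, drop_length_sub_one hne,
    Option.some.inj ((getLast?_eq_some_getLast hne).symm.trans hr)]

lemma mem_drop_idxOf_or (hx : x ∈ l) (hy : y ∈ l) :
    y ∈ l.drop (l.idxOf x) ∨ x ∈ l.drop (l.idxOf y) := by
  wlog h : l.idxOf x ≤ l.idxOf y generalizing x y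
  · exact (this hy hx (by omega)).symm
  have hy' : l.idxOf y < l.length := idxOf_lt_length_of_mem hy
  left
  rw [mem_drop_iff_getElem]
  exact ⟨l.idxOf y - l.idxOf x, by omega, by simp only [Nat.add_sub_cancel' h, getElem_idxOf]⟩

end List

section Paths

variable {V : Type*} [DecidableEq V] {r : V}

lemma seg_eq_drop_idxOf {l : List V} {u : V} (hl : l.Nodup) (hr : l.getLast? = some r)
    (hu : u ∈ l) : seg l u r = l.drop (l.idxOf u) := by
  have hu' := List.idxOf_lt_length_of_mem hu
  have hr' := List.idxOf_eq_length_sub_one_of_getLast? hl hr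
  rw [seg, min_eq_left (by omega), max_eq_right (by omega), List.take_of_length_le]
  rw [List.length_drop]; omega

lemma Consistent.drop_idxOf_eq {ι : Type*} {p : ι → List V} (hcons : Consistent p)
    (hnodup : ∀ i, (p i).Nodup) (hlast : ∀ i, (p i).getLast? = some r) {i j : ι} {u : V}
    (hui : u ∈ p i) (huj : u ∈ p j) :
    (p i).drop ((p i).idxOf u) = (p j).drop ((p j).idxOf u) := by
  by_cases hur : u = r
  · subst hur
    rw [List.drop_idxOf_eq_singleton_of_getLast? (hnodup i) (hlast i),
      List.drop_idxOf_eq_singleton_of_getLast? (hnodup j) (hlast j)]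
  have hseg := hcons i j u r hui (List.mem_of_getLast? (hlast i)) huj
    (List.mem_of_getLast? (hlast j))
  rw [seg_eq_drop_idxOf (hnodup i) (hlast i) hui, seg_eq_drop_idxOf (hnodup j) (hlast j) huj]
    at hseg
  refine hseg.resolve_right fun h => hur ?_
  -- the left side starts at `u`, the reversed right side at `r`
  have hhead := congrArg List.head? h
  rw [List.head?_drop, List.getElem?_idxOf hui, List.head?_reverse, List.getLast?_drop,
    if_neg (List.idxOf_lt_length_of_mem huj).not_ge, hlast j] at hhead
  exact Option.some.inj hhead

lemma encoding_subset_of_mem_drop_idxOf {m : ℕ} {p : Fin m → List V} (hcons : Consistent p)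
    (hnodup : ∀ i, (p i).Nodup) (hlast : ∀ i, (p i).getLast? = some r) {i : Fin m} {x y : V}
    (hx : x ∈ p i) (hy : y ∈ (p i).drop ((p i).idxOf x)) : encoding p x ⊆ encoding p y := by
  intro k hk
  rw [encoding, mem_filter] at hk ⊢
  rw [hcons.drop_idxOf_eq hnodup hlast hx hk.2] at hy
  exact ⟨mem_univ k, List.mem_of_mem_drop hy⟩

lemma encoding_subset_or_subset_or_disjoint {m : ℕ} {p : Fin m → List V} (hcons : Consistent p)
    (hnodup : ∀ i, (p i).Nodup) (hlast : ∀ i, (p i).getLast? = some r) (v w : V) :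
    encoding p v ⊆ encoding p w ∨ encoding p w ⊆ encoding p v ∨
      Disjoint (encoding p v) (encoding p w) := by
  by_cases hvw : Disjoint (encoding p v) (encoding p w)
  · exact .inr (.inr hvw)
  obtain ⟨i, hv, hw⟩ := not_disjoint_iff.1 hvw
  rw [encoding, mem_filter] at hv hw
  rw [← or_assoc]
  exact .inl <| (List.mem_drop_idxOf_or hv.2 hw.2).imp
    (encoding_subset_of_mem_drop_idxOf hcons hnodup hlast hv.2)
    (encoding_subset_of_mem_drop_idxOf hcons hnodup hlast hw.2)

end Paths

section Encodings

variable {V : Type*} [DecidableEq V] {m : ℕ} (p : Fin m → List V)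

open Classical in
noncomputable def identifiableEncodings : Finset (Finset (Fin m)) :=
  univ.filter fun S => ∃ v, Identifiable p v ∧ encoding p v = S

lemma mem_identifiableEncodings {S : Finset (Fin m)} :
    S ∈ identifiableEncodings p ↔ ∃ v, Identifiable p v ∧ encoding p v = S := by
  simp [identifiableEncodings]

lemma injOn_encoding_identifiable : Set.InjOn (encoding p) {v | Identifiable p v} :=
  fun v _ _ hw hvw => by_contra fun hne => hw.2 v hne hvw

lemma ncard_identifiable_mem_eq_card_filter (k : Fin m) :
    {v | v ∈ p k ∧ Identifiable p v}.ncard = #((identifiableEncodings p).filter (k ∈ ·)) := by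
  rw [← (injOn_encoding_identifiable p).mono (fun v hv => hv.2) |>.ncard_image,
    ← Set.ncard_coe_finset]
  congr 1
  ext S
  simp only [Set.mem_image, Set.mem_ofPred_eq, coe_filter, mem_identifiableEncodings]
  constructor
  · rintro ⟨v, ⟨hvk, hv⟩, rfl⟩
    exact ⟨⟨v, hv, rfl⟩, mem_filter.2 ⟨mem_univ k, hvk⟩⟩
  · rintro ⟨⟨v, hv, rfl⟩, hk⟩
    exact ⟨v, ⟨(mem_filter.1 hk).2, hv⟩, rfl⟩

lemma sum_ncard_identifiable_mem_eq_sum_card :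
    ∑ k, {v | v ∈ p k ∧ Identifiable p v}.ncard = ∑ S ∈ identifiableEncodings p, #S := by
  simp_rw [ncard_identifiable_mem_eq_card_filter]
  refine (sum_card_bipartiteAbove_eq_sum_card_bipartiteBelow (· ∈ ·)).trans (sum_congr rfl ?_)
  intro S _
  rw [bipartiteBelow, filter_mem_eq_inter, univ_inter]

end Encodings

lemma isLaminar_identifiableEncodings {V : Type*} [DecidableEq V] {m : ℕ} {p : Fin m → List V}
    {r : V} (hcons : Consistent p) (hnodup : ∀ i, (p i).Nodup)
    (hlast : ∀ i, (p i).getLast? = some r) : IsLaminar (identifiableEncodings p) := by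
  intro S hS T hT
  obtain ⟨v, -, rfl⟩ := (mem_identifiableEncodings p).1 hS
  obtain ⟨w, -, rfl⟩ := (mem_identifiableEncodings p).1 hT
  exact encoding_subset_or_subset_or_disjoint hcons hnodup hlast v w

/-- Lemma V.8: if the `m` consistent monitoring paths share a common final node `r`
(forming a tree rooted at `r`), and `ℓ_k` is the number of identifiable nodes on
path `p k`, then `Σ_k ℓ_k ≤ (m² + 3m − 2) / 2`. -/
theorem sum_identifiable_on_paths_le {V : Type*} [DecidableEq V] {m : ℕ}
    (p : Fin m → List V) (r : V) (hnodup : ∀ i, (p i).Nodup)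
    (hcons : Consistent p) (hlast : ∀ i, (p i).getLast? = some r) :
    ∑ k : Fin m, {v : V | v ∈ p k ∧ Identifiable p v}.ncard ≤
      (m ^ 2 + 3 * m - 2) / 2 := by
  have h := (isLaminar_identifiableEncodings hcons hnodup hlast).two_mul_sum_card_le
    fun S _ => subset_univ S
  rw [card_univ, Fintype.card_fin, ← sum_ncard_identifiable_mem_eq_sum_card] at h
  exact (Nat.le_div_iff_mul_le two_pos).2 (by linarith)
end
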